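/- Let R be a commutative ring and M, N be R-modules with M generated by v_1,...,v_n. A polynomial law φ from M to N is completely determined by the element ι(φ) := φ_{R[x_1,...,x_n]}(x_1 ⊗ v_1 + ... + x_n ⊗ v_n) of R[x_1,...,x_n] ⊗ N; that is, the map ι from polynomial laws M → N to R[x_1,...,x_n] ⊗ N is injective. If moreover M is free with basis v_1,...,v_n, then ι is a bijection. -/

import Mathlib

open scoped TensorProduct

universe u

/-- A polynomial law `M → N` over `R`: a family of maps `A ⊗[R] M → A ⊗[R] N`, one for every
commutative `R`-algebra `A`, commuting with base change along all `R`-algebra homomorphisms. -/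
structure PolyLaw (R : Type u) [CommRing R] (M N : Type u)
    [AddCommGroup M] [Module R M] [AddCommGroup N] [Module R N] : Type (u + 1) where
  toFun : ∀ (A : Type u) [CommRing A] [Algebra R A], A ⊗[R] M → A ⊗[R] N
  isCompat : ∀ {A B : Type u} [CommRing A] [Algebra R A] [CommRing B] [Algebra R B]
      (φ : A →ₐ[R] B) (x : A ⊗[R] M),
      LinearMap.rTensor N φ.toLinearMap (toFun A x) = toFun B (LinearMap.rTensor M φ.toLinearMap x)

namespace PolyLaw

variable {R : Type u} [CommRing R] {M N P : Type u}
  [AddCommGroup M] [Module R M] [AddCommGroup N] [Module R N] [AddCommGroup P] [Module R P]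

theorem ext' {f g : PolyLaw R M N}
    (h : ∀ (A : Type u) [CommRing A] [Algebra R A] (x : A ⊗[R] M), f.toFun A x = g.toFun A x) :
    f = g := by
  cases f; cases g
  simp only [mk.injEq]
  funext A instA instB x
  exact h A x

/-- A polynomial law is homogeneous of degree `d` if `φ_A (a • m) = a ^ d • φ_A m` always. -/
def IsHomogeneous (f : PolyLaw R M N) (d : ℕ) : Prop :=
  ∀ (A : Type u) [CommRing A] [Algebra R A] (a : A) (x : A ⊗[R] M),
    f.toFun A (a • x) = a ^ d • f.toFun A x

/-- The polynomial law induced by a linear map. -/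
noncomputable def ofLinear (ψ : M →ₗ[R] N) : PolyLaw R M N where
  toFun A _ _ := LinearMap.lTensor A ψ
  isCompat φ x := by
    show LinearMap.rTensor N φ.toLinearMap (LinearMap.lTensor _ ψ x)
      = LinearMap.lTensor _ ψ (LinearMap.rTensor M φ.toLinearMap x)
    rw [← LinearMap.comp_apply, ← LinearMap.comp_apply,
      LinearMap.rTensor_comp_lTensor, LinearMap.lTensor_comp_rTensor]

/-- Composition of polynomial laws. -/
def comp (g : PolyLaw R N P) (f : PolyLaw R M N) : PolyLaw R M P where
  toFun A _ _ x := g.toFun A (f.toFun A x)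
  isCompat φ x := by rw [g.isCompat φ, f.isCompat φ]

/-- Translation by an element `u : N`, as a polynomial law `N → N`. -/
noncomputable def translation (u : N) : PolyLaw R N N where
  toFun A _ _ x := x + (1 : A) ⊗ₜ[R] u
  isCompat φ x := by
    simp [map_add, LinearMap.rTensor_tmul, map_one]

end PolyLaw

open PolyLaw MvPolynomial

/-! Base change along `aeval a : R[x_1, …, x_n] →ₐ[R] A` sends the generic element
`∑ x_i ⊗ v_i` to `∑ a_i ⊗ v_i`, and when the `v_i` span `M` every element of `A ⊗ M` has this
form; so `φ_A` is the specialization of `ι(φ)` and `φ` is determined by `ι(φ)`. For a basis,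
any `t` is `ι` of the law specializing `t` at the coordinates of `x`, which is compatible with
base change because taking coordinates is. -/

namespace PolyLaw

variable {R : Type u} [CommRing R] {M N : Type u}
  [AddCommGroup M] [Module R M] [AddCommGroup N] [Module R N] {n : ℕ}

/-- The map `ι` of the paper. -/
noncomputable def iota (v : Fin n → M) (φ : PolyLaw R M N) : MvPolynomial (Fin n) R ⊗[R] N :=
  φ.toFun (MvPolynomial (Fin n) R) (∑ i, X i ⊗ₜ[R] v i)

theorem exists_sum_tmul_eq_of_span_eq_top {v : Fin n → M}
    (hv : Submodule.span R (Set.range v) = ⊤)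
    {A : Type u} [CommRing A] [Algebra R A] (x : A ⊗[R] M) :
    ∃ a : Fin n → A, ∑ i, a i ⊗ₜ[R] v i = x := by
  induction x using TensorProduct.induction_on with
  | zero => exact ⟨0, by simp⟩
  | tmul a m =>
    have hm : m ∈ Submodule.span R (Set.range v) := hv ▸ Submodule.mem_top
    obtain ⟨c, hc⟩ := (Submodule.mem_span_range_iff_exists_fun R).1 hm
    refine ⟨fun i => c i • a, ?_⟩
    simp_rw [← hc, TensorProduct.tmul_sum, TensorProduct.smul_tmul]
  | add x y hx hy =>
    obtain ⟨a, rfl⟩ := hx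
    obtain ⟨c, rfl⟩ := hy
    exact ⟨a + c, by simp [TensorProduct.add_tmul, Finset.sum_add_distrib]⟩

theorem toFun_sum_tmul (φ : PolyLaw R M N) (v : Fin n → M)
    {A : Type u} [CommRing A] [Algebra R A] (a : Fin n → A) :
    φ.toFun A (∑ i, a i ⊗ₜ[R] v i) = (aeval a).toLinearMap.rTensor N (iota v φ) := by
  rw [iota, φ.isCompat (aeval a), map_sum]
  simp [LinearMap.rTensor_tmul]

theorem iota_injective {v : Fin n → M} (hv : Submodule.span R (Set.range v) = ⊤) :
    Function.Injective (iota (R := R) (N := N) v) := by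
  intro φ ψ h
  refine ext' fun A _ _ x => ?_
  obtain ⟨a, rfl⟩ := exists_sum_tmul_eq_of_span_eq_top hv x
  rw [toFun_sum_tmul, toFun_sum_tmul, h]

theorem baseChange_repr_rTensor (b : Module.Basis (Fin n) R M) {A B : Type u}
    [CommRing A] [Algebra R A] [CommRing B] [Algebra R B]
    (α : A →ₐ[R] B) (x : A ⊗[R] M) (i : Fin n) :
    (b.baseChange B).repr (α.toLinearMap.rTensor M x) i = α ((b.baseChange A).repr x i) := by
  induction x using TensorProduct.induction_on with
  | zero => simp
  | tmul a m => simp [Module.Basis.baseChange_repr_tmul, Algebra.smul_def]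
  | add x y hx hy => simp [hx, hy]

noncomputable def ofBasis (b : Module.Basis (Fin n) R M) (t : MvPolynomial (Fin n) R ⊗[R] N) :
    PolyLaw R M N where
  toFun A _ _ x := (aeval fun i => (b.baseChange A).repr x i).toLinearMap.rTensor N t
  isCompat {A B} _ _ _ _ α x := by
    have hcoord : (aeval fun i => (b.baseChange B).repr (α.toLinearMap.rTensor M x) i)
        = α.comp (aeval fun i => (b.baseChange A).repr x i) := by
      simp only [comp_aeval, baseChange_repr_rTensor]
    rw [hcoord, AlgHom.comp_toLinearMap, LinearMap.rTensor_comp, LinearMap.comp_apply]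

theorem baseChange_repr_sum_X_tmul (b : Module.Basis (Fin n) R M) (i : Fin n) :
    (b.baseChange (MvPolynomial (Fin n) R)).repr (∑ j, X j ⊗ₜ[R] b j) i = X i := by
  simp [Module.Basis.baseChange_repr_tmul, Finsupp.single_apply]

theorem iota_ofBasis (b : Module.Basis (Fin n) R M) (t : MvPolynomial (Fin n) R ⊗[R] N) :
    iota b (ofBasis b t) = t := by
  change (aeval _).toLinearMap.rTensor N t = t
  simp_rw [baseChange_repr_sum_X_tmul, aeval_X_left]
  simp

theorem iota_bijective (b : Module.Basis (Fin n) R M) :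
    Function.Bijective (iota (R := R) (N := N) b) :=
  ⟨iota_injective b.span_eq, fun t => ⟨ofBasis b t, iota_ofBasis b t⟩⟩

end PolyLaw

theorem polyLaw_iota_injective (R : Type u) [CommRing R] (M N : Type u)
    [AddCommGroup M] [Module R M] [AddCommGroup N] [Module R N]
    (n : ℕ) (v : Fin n → M) (hv : Submodule.span R (Set.range v) = ⊤) :
    Function.Injective (fun φ : PolyLaw R M N =>
      φ.toFun (MvPolynomial (Fin n) R) (∑ i, MvPolynomial.X i ⊗ₜ[R] v i)) ∧
    (∀ b : Module.Basis (Fin n) R M, (∀ i, b i = v i) →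
      Function.Bijective (fun φ : PolyLaw R M N =>
        φ.toFun (MvPolynomial (Fin n) R) (∑ i, MvPolynomial.X i ⊗ₜ[R] v i))) := by
  refine ⟨PolyLaw.iota_injective hv, fun b hb => ?_⟩
  obtain rfl : ⇑b = v := funext hb
  exact PolyLaw.iota_bijective b
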